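/- Let Ω ⊆ ℝ^d be a bounded measurable set, let x_1, …, x_N ∈ ℝ^d be pairwise distinct, let ν ∈ ℝ^N, and let K_p(ψ) = ∫_Ω min(0, min_i (‖x − x_i‖² − ψ_i)) dx + Σ_i ψ_i ν_i. Then for every ψ ∈ ℝ^N and every index i, the function t ↦ K_p(ψ + t e_i) (where e_i is the i-th standard basis vector) is differentiable at t = 0 with derivative ν_i − |V_i^ψ|, the Lebesgue volume of the partial-transport cell of index i. -/

import Mathlib

open MeasureTheory

def potCell {d N : ℕ} (Ω : Set (EuclideanSpace ℝ (Fin d)))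
    (x : Fin N → EuclideanSpace ℝ (Fin d)) (ψ : Fin N → ℝ) (i : Fin N) :
    Set (EuclideanSpace ℝ (Fin d)) :=
  {p ∈ Ω | (∀ j, ‖p - x i‖ ^ 2 - ψ i ≤ ‖p - x j‖ ^ 2 - ψ j) ∧ ‖p - x i‖ ^ 2 ≤ ψ i}

/-!
Write the integrand as `min (C p) (A p - t)` with `A p = ‖p - x i‖² - ψ i` and
`C p = min (0, min_{j ≠ i} (‖p - x j‖² - ψ j))`. It is `1`-Lipschitz in `t`, and off the set
`{A = C}` its derivative at `t = 0` is `-1` on the cell `{A ≤ C}` and `0` elsewhere, so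
dominated differentiation gives `-|V_i^ψ|`. The set `{A = C}` is null: it lies in the sphere
`‖p - x i‖² = ψ i` and in the sets `A p = ‖p - x j‖² - ψ j`, `j ≠ i`, which are affine
hyperplanes because the points `x j` are distinct.
-/

open Finset Function Filter

theorem min_inf'_update_eq {ι α : Type*} [DecidableEq ι] [LinearOrder α] {s : Finset ι}
    (hs : s.Nonempty) {i : ι} (hi : i ∈ s) (f : ι → α) (a b : α) :
    min a (s.inf' hs (update f i b)) = min (s.inf' hs (update f i a)) b := by
  refine eq_of_forall_le_iff fun c => ?_
  simp only [le_min_iff, le_inf'_iff, update_apply]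
  grind

section MinWithZeroExcept

variable {ι : Type*} [Fintype ι] [DecidableEq ι]

/-- `min (0, min_{j ≠ i} c j)`; putting `0` in place of `c i` keeps the index set nonempty. -/
def minWithZeroExcept (c : ι → ℝ) (i : ι) : ℝ :=
  univ.inf' (univ_nonempty_iff.2 ⟨i⟩) (update c i 0)

theorem min_zero_inf'_update_eq (c : ι → ℝ) (i : ι) (v : ℝ) :
    min 0 (univ.inf' ⟨i, mem_univ i⟩ (update c i v)) = min (minWithZeroExcept c i) v :=
  min_inf'_update_eq _ (mem_univ i) c 0 v

theorem le_minWithZeroExcept_iff {c : ι → ℝ} {i : ι} :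
    c i ≤ minWithZeroExcept c i ↔ (∀ j, c i ≤ c j) ∧ c i ≤ 0 := by
  simp only [minWithZeroExcept, le_inf'_iff, mem_univ, true_implies, update_apply]
  grind

theorem eq_zero_or_exists_eq_of_eq_minWithZeroExcept {c : ι → ℝ} {i : ι}
    (h : c i = minWithZeroExcept c i) : c i = 0 ∨ ∃ j ≠ i, c i = c j := by
  obtain ⟨j, -, hj⟩ := exists_mem_eq_inf' (univ_nonempty_iff.2 ⟨i⟩) (update c i 0)
  rw [minWithZeroExcept, hj] at h
  rcases eq_or_ne j i with rfl | hji
  · simp_all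
  · exact .inr ⟨j, hji, by simpa [hji] using h⟩

theorem continuous_minWithZeroExcept (i : ι) :
    Continuous fun c : ι → ℝ => minWithZeroExcept c i :=
  Continuous.finset_inf'_apply _ fun j _ =>
    (continuous_apply j).comp (continuous_id.update i continuous_const)

end MinWithZeroExcept

theorem hasDerivAt_min_const_sub {a c : ℝ} (h : a ≠ c) :
    HasDerivAt (fun t => min c (a - t)) (if a ≤ c then -1 else 0) 0 := by
  rcases h.lt_or_gt with h | h
  · rw [if_pos h.le]
    refine ((hasDerivAt_id (0 : ℝ)).const_sub a).congr_of_eventuallyEq ?_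
    filter_upwards [eventually_gt_nhds (sub_neg.2 h)] with t ht
    exact min_eq_right (by linarith)
  · rw [if_neg h.not_ge]
    refine (hasDerivAt_const (0 : ℝ) c).congr_of_eventuallyEq ?_
    filter_upwards [eventually_lt_nhds (sub_pos.2 h)] with t ht
    exact min_eq_left (by linarith)

theorem hasDerivAt_integral_min_sub {α : Type*} [MeasurableSpace α] {μ : Measure α}
    [IsFiniteMeasure μ] {A C : α → ℝ} (hA : Measurable A) (hC : Measurable C)
    (hint : Integrable (fun p => min (C p) (A p)) μ) (hAC : ∀ᵐ p ∂μ, A p ≠ C p) :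
    HasDerivAt (fun t => ∫ p, min (C p) (A p - t) ∂μ) (-μ.real {p | A p ≤ C p}) 0 := by
  have hle : MeasurableSet {p | A p ≤ C p} := measurableSet_le hA hC
  have hlip (p : α) : LipschitzWith 1 fun t : ℝ => min (C p) (A p - t) :=
    (IsometryEquiv.subLeft (A p)).isometry.lipschitz.const_min (C p)
  have hderiv : ∀ᵐ p ∂μ, HasDerivAt (fun t => min (C p) (A p - t))
      ({p | A p ≤ C p}.indicator (fun _ => -1) p) 0 :=
    hAC.mono fun p hp => by
      simpa only [Set.indicator_apply, Set.mem_ofPred_eq] using hasDerivAt_min_const_sub hp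
  obtain ⟨-, key⟩ := hasDerivAt_integral_of_dominated_loc_of_lip (bound := fun _ => 1) univ_mem
    (Eventually.of_forall fun t => (hC.min (hA.sub_const t)).aestronglyMeasurable)
    (by simpa using hint) ((measurable_const.indicator hle).aestronglyMeasurable)
    (Eventually.of_forall fun p => by simpa using hlip p)
    (integrable_const 1) hderiv
  rwa [integral_indicator_const _ hle, smul_eq_mul, mul_neg_one] at key

theorem hasDerivAt_sum_add_mul_single_mul {ι : Type*} [Fintype ι] [DecidableEq ι]
    (ψ ν : ι → ℝ) (i : ι) (t₀ : ℝ) :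
    HasDerivAt (fun t : ℝ => ∑ j, (ψ j + t * (Pi.single i (1 : ℝ) : ι → ℝ) j) * ν j)
      (ν i) t₀ := by
  have h : (fun t : ℝ => ∑ j, (ψ j + t * (Pi.single i (1 : ℝ) : ι → ℝ) j) * ν j)
      = fun t => ∑ j, ψ j * ν j + t * ν i := by
    funext t
    simp [add_mul, sum_add_distrib, Pi.single_apply]
  rw [h]
  simpa using ((hasDerivAt_id t₀).mul_const (ν i)).const_add (∑ j, ψ j * ν j)

theorem addHaar_setOf_norm_sub_sq_eq {E : Type*} [NormedAddCommGroup E] [NormedSpace ℝ E]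
    [Nontrivial E] [FiniteDimensional ℝ E] [MeasurableSpace E] [BorelSpace E] (μ : Measure E)
    [μ.IsAddHaarMeasure] (a : E) (r : ℝ) :
    μ {p | ‖p - a‖ ^ 2 = r} = 0 :=
  measure_mono_null (fun p (hp : ‖p - a‖ ^ 2 = r) => by
    simp [mem_sphere_iff_norm, ← hp, Real.sqrt_sq (norm_nonneg _)])
    (Measure.addHaar_sphere μ a √r)

section AddHaar

variable {E : Type*} [NormedAddCommGroup E] [InnerProductSpace ℝ E] [FiniteDimensional ℝ E]
  [MeasurableSpace E] [BorelSpace E] (μ : Measure E) [μ.IsAddHaarMeasure]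

theorem addHaar_setOf_inner_eq {v : E} (hv : v ≠ 0) (c : ℝ) :
    μ {p | inner ℝ v p = c} = 0 := by
  set p₀ : E := (c / ‖v‖ ^ 2) • v
  have hp₀ : inner ℝ v p₀ = c := by
    rw [real_inner_smul_right, real_inner_self_eq_norm_sq, div_mul_cancel₀ _ (by simpa using hv)]
  let H := AffineSubspace.mk' p₀ (LinearMap.ker (innerₛₗ ℝ v))
  have hH : (H : Set E) = {p | inner ℝ v p = c} := by
    ext p
    simp [H, AffineSubspace.mem_mk', inner_sub_right, hp₀, sub_eq_zero]
  have hvH : p₀ + v ∉ H := by simp [H, AffineSubspace.mem_mk', hv]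
  rw [← hH]
  exact Measure.addHaar_affineSubspace μ H fun h => hvH (h ▸ AffineSubspace.mem_top ℝ E _)

theorem addHaar_setOf_norm_sub_sq_sub_eq {a b : E} (hab : a ≠ b) (α β : ℝ) :
    μ {p | ‖p - a‖ ^ 2 - α = ‖p - b‖ ^ 2 - β} = 0 := by
  refine measure_mono_null (fun p hp => ?_)
    (addHaar_setOf_inner_eq μ (sub_ne_zero.2 hab.symm) ((‖b‖ ^ 2 - ‖a‖ ^ 2 + α - β) / 2))
  simp only [Set.mem_ofPred_eq, norm_sub_sq_real] at hp ⊢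
  rw [inner_sub_left, real_inner_comm p b, real_inner_comm p a]
  linarith

end AddHaar

section PowerDist

variable {E ι : Type*} [NormedAddCommGroup E]

def powerDist (x : ι → E) (ψ : ι → ℝ) (p : E) (j : ι) : ℝ :=
  ‖p - x j‖ ^ 2 - ψ j

theorem continuous_powerDist (x : ι → E) (ψ : ι → ℝ) : Continuous (powerDist x ψ) :=
  continuous_pi fun _ => ((continuous_id.sub continuous_const).norm.pow 2).sub continuous_const

variable [Fintype ι] [DecidableEq ι]

theorem min_zero_inf'_powerDist_sub_single (x : ι → E) (ψ : ι → ℝ) (i : ι) (t : ℝ) (p : E) :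
    min 0 (univ.inf' ⟨i, mem_univ i⟩
      fun j => ‖p - x j‖ ^ 2 - (ψ j + t * (Pi.single i (1 : ℝ) : ι → ℝ) j))
    = min (minWithZeroExcept (powerDist x ψ p) i) (powerDist x ψ p i - t) := by
  rw [← min_zero_inf'_update_eq]
  congr 2
  funext j
  rcases eq_or_ne j i with rfl | hji
  · simp only [Pi.single_eq_same, mul_one, powerDist, update_self]
    ring
  · simp [powerDist, hji]

theorem addHaar_setOf_powerDist_eq_minWithZeroExcept [InnerProductSpace ℝ E]
    [FiniteDimensional ℝ E] [Nontrivial E] [MeasurableSpace E] [BorelSpace E] (μ : Measure E)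
    [μ.IsAddHaarMeasure] {x : ι → E} (hx : Injective x) (ψ : ι → ℝ) (i : ι) :
    μ {p | powerDist x ψ p i = minWithZeroExcept (powerDist x ψ p) i} = 0 := by
  refine measure_mono_null (fun p hp => ?_) (measure_union_null
    (addHaar_setOf_norm_sub_sq_eq μ (x i) (ψ i))
    (measure_iUnion_null fun j => measure_iUnion_null fun hji : j ≠ i =>
      addHaar_setOf_norm_sub_sq_sub_eq μ (hx.ne hji.symm) (ψ i) (ψ j)))
  rcases eq_zero_or_exists_eq_of_eq_minWithZeroExcept hp with h | ⟨j, hji, h⟩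
  · exact .inl (sub_eq_zero.1 h)
  · exact .inr (Set.mem_biUnion hji h)

end PowerDist

theorem potCell_eq_setOf_le_minWithZeroExcept_inter {d N : ℕ}
    (Ω : Set (EuclideanSpace ℝ (Fin d))) (x : Fin N → EuclideanSpace ℝ (Fin d))
    (ψ : Fin N → ℝ) (i : Fin N) :
    potCell Ω x ψ i = {p | powerDist x ψ p i ≤ minWithZeroExcept (powerDist x ψ p) i} ∩ Ω := by
  ext p
  rw [Set.mem_inter_iff, Set.mem_ofPred_eq, le_minWithZeroExcept_iff]
  simp only [potCell, powerDist, sub_nonpos, Set.mem_ofPred_eq]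
  tauto

/-- The partial-transport dual functional `K_p` has partial derivative `νᵢ - |Vᵢ^ψ|`
in the direction of the `i`-th standard basis vector. -/
theorem partial_transport_dual_partial_deriv
    (d N : ℕ) (hd : 1 ≤ d)
    (Ω : Set (EuclideanSpace ℝ (Fin d)))
    (hΩm : MeasurableSet Ω) (hΩb : Bornology.IsBounded Ω)
    (x : Fin N → EuclideanSpace ℝ (Fin d)) (hx : Function.Injective x)
    (ν : Fin N → ℝ) (ψ : Fin N → ℝ) (i : Fin N) :
    HasDerivAt (fun t : ℝ =>
        (∫ p in Ω, min 0 (Finset.univ.inf' ⟨i, Finset.mem_univ i⟩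
            (fun j => ‖p - x j‖ ^ 2 - (ψ j + t * (Pi.single i (1 : ℝ) : Fin N → ℝ) j)))) +
          ∑ j, (ψ j + t * (Pi.single i (1 : ℝ) : Fin N → ℝ) j) * ν j)
      (ν i - (volume (potCell Ω x ψ i)).toReal) 0 := by
  have : Nonempty (Fin d) := ⟨⟨0, hd⟩⟩
  have : IsFiniteMeasure (volume.restrict Ω) :=
    isFiniteMeasure_restrict.2 hΩb.measure_lt_top.ne
  have hA : Continuous fun p => powerDist x ψ p i :=
    (continuous_apply i).comp (continuous_powerDist x ψ)
  have hC : Continuous fun p => minWithZeroExcept (powerDist x ψ p) i :=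
    (continuous_minWithZeroExcept i).comp (continuous_powerDist x ψ)
  have hK := hasDerivAt_integral_min_sub (μ := volume.restrict Ω) hA.measurable hC.measurable
    (((hC.min hA).continuousOn.integrableOn_compact hΩb.isCompact_closure).mono_set
      subset_closure)
    (ae_restrict_of_ae (measure_eq_zero_iff_ae_notMem.1
      (addHaar_setOf_powerDist_eq_minWithZeroExcept volume hx ψ i)))
  rw [measureReal_restrict_apply' hΩm, ← potCell_eq_setOf_le_minWithZeroExcept_inter,
    measureReal_def] at hK
  rw [sub_eq_neg_add]
  refine (hK.add (hasDerivAt_sum_add_mul_single_mul ψ ν i 0)).congr_of_eventuallyEq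
    (Eventually.of_forall fun t => ?_)
  simp only [Pi.add_apply, min_zero_inf'_powerDist_sub_single]
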